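/- arXiv:1510.07188 — 3 statements merged into one kernel-verified Lean document; each statement's English description precedes it below -/
import Mathlib

section
/- Let 0 < p < 1 and q = 1/(1-p), and let s : ℕ → ℝ be a function with s(n) ≥ 1 for all n and s(n) → ∞ as n → ∞. Then for all sufficiently large n, n^( (log_q n) / s(n) ) · exp( - n^(1 - 1/s(n)) / 4 ) ≤ exp( - √n / 4 ), where log_q n = log n / log q. -/
open Filter in
theorem small_dominating_set_prob_bound (p : ℝ) (hp0 : 0 < p) (hp1 : p < 1)
    (q : ℝ) (hq : q = 1 / (1 - p)) (s : ℕ → ℝ) (hs1 : ∀ n, 1 ≤ s n)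
    (hs : Tendsto s atTop atTop) :
    ∀ᶠ n : ℕ in atTop,
      (n : ℝ) ^ ((Real.log n / Real.log q) / s n) *
          Real.exp (-(n : ℝ) ^ (1 - 1 / s n) / 4) ≤
        Real.exp (-Real.sqrt n / 4) := by
  have h1p : 0 < 1 - p := by linarith
  have hq1 : 1 < q := by
    rw [hq, lt_div_iff₀ h1p]; linarith
  have hL : 0 < Real.log q := Real.log_pos hq1
  have hlittle := isLittleO_log_rpow_rpow_atTop (2 : ℝ) (show (0:ℝ) < 3/4 by norm_num)
  have hev : ∀ᶠ x : ℝ in atTop,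
      ‖Real.log x ^ (2:ℝ)‖ ≤ (Real.log q / 8) * ‖x ^ (3/4 : ℝ)‖ :=
    hlittle.def (by positivity)
  have hevN : ∀ᶠ n : ℕ in atTop,
      ‖Real.log n ^ (2:ℝ)‖ ≤ (Real.log q / 8) * ‖(n:ℝ) ^ (3/4 : ℝ)‖ :=
    tendsto_natCast_atTop_atTop.eventually hev
  have hs4 : ∀ᶠ n : ℕ in atTop, 4 ≤ s n := hs.eventually_ge_atTop 4
  filter_upwards [hs4, hevN, eventually_ge_atTop 16] with n hsn hlog h16
  have hn1 : (1:ℝ) ≤ n := by exact_mod_cast le_trans (by norm_num) h16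
  have hn0 : (0:ℝ) < n := lt_of_lt_of_le one_pos hn1
  have hlogn : 0 ≤ Real.log n := Real.log_nonneg hn1
  have hsn0 : 0 < s n := lt_of_lt_of_le one_pos (hs1 n)
  -- rewrite powers as exponentials
  rw [Real.rpow_def_of_pos hn0, ← Real.exp_add, Real.exp_le_exp]
  -- bound on the log-squared term
  have hl2 : Real.log n ^ 2 ≤ (Real.log q / 8) * (n:ℝ) ^ (3/4 : ℝ) := by
    have h1 : ‖Real.log n ^ (2:ℝ)‖ = Real.log n ^ 2 := by
      rw [Real.norm_eq_abs, abs_of_nonneg (Real.rpow_nonneg hlogn _),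
        Real.rpow_two]
    have h2 : ‖(n:ℝ) ^ (3/4 : ℝ)‖ = (n:ℝ) ^ (3/4 : ℝ) := by
      rw [Real.norm_eq_abs, abs_of_nonneg (Real.rpow_nonneg hn0.le _)]
    rw [h1, h2] at hlog
    exact hlog
  -- n^(1 - 1/s n) ≥ n^(3/4)
  have hexp : (3/4 : ℝ) ≤ 1 - 1 / s n := by
    have : 1 / s n ≤ 1 / 4 := by
      apply div_le_div_of_nonneg_left (by norm_num) (by norm_num) hsn
    linarith
  have hpow : (n:ℝ) ^ (3/4 : ℝ) ≤ (n:ℝ) ^ (1 - 1 / s n) :=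
    Real.rpow_le_rpow_of_exponent_le hn1 hexp
  -- √n * 2 ≤ n^(3/4)
  have hsqrt : Real.sqrt n = (n:ℝ) ^ (1/2 : ℝ) := Real.sqrt_eq_rpow n
  have hq4 : (2:ℝ) ≤ (n:ℝ) ^ (1/4 : ℝ) := by
    have h4 : ((n:ℝ) ^ (1/4 : ℝ)) ^ (4:ℕ) = (n:ℝ) := by
      rw [← Real.rpow_natCast ((n:ℝ) ^ (1/4 : ℝ)) 4, ← Real.rpow_mul hn0.le]
      norm_num
    have : (2:ℝ) ^ (4:ℕ) ≤ ((n:ℝ) ^ (1/4 : ℝ)) ^ (4:ℕ) := by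
      rw [h4]; norm_num; exact_mod_cast h16
    exact le_of_pow_le_pow_left₀ (by norm_num) (Real.rpow_nonneg hn0.le _) this
  have hsplit : (n:ℝ) ^ (3/4 : ℝ) = (n:ℝ) ^ (1/2 : ℝ) * (n:ℝ) ^ (1/4 : ℝ) := by
    rw [← Real.rpow_add hn0]; norm_num
  have hsq2 : 2 * Real.sqrt n ≤ (n:ℝ) ^ (3/4 : ℝ) := by
    rw [hsqrt, hsplit]
    have h12 : (0:ℝ) ≤ (n:ℝ) ^ (1/2 : ℝ) := Real.rpow_nonneg hn0.le _
    nlinarith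
  -- the main LHS term
  have hmain : Real.log n * (Real.log n / Real.log q / s n) ≤ Real.log n ^ 2 / Real.log q := by
    have heq : Real.log n * (Real.log n / Real.log q / s n)
        = Real.log n ^ 2 / (Real.log q * s n) := by ring
    rw [heq]
    apply div_le_div_of_nonneg_left (by positivity) hL
    nlinarith [hs1 n]
  have hl2' : Real.log n ^ 2 / Real.log q ≤ (n:ℝ) ^ (3/4 : ℝ) / 8 := by
    rw [div_le_div_iff₀ hL (by norm_num)]
    nlinarith
  nlinarith [hpow, hsq2, hmain, hl2', Real.sqrt_nonneg (n:ℝ)]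
end

section
/- Let g : ℕ → ℝ be a monotonically increasing function with 1 < g(n) < n for all n ≥ 2 and g(n) → ∞ as n → ∞. Then for all sufficiently large n, exp( n^(1/3) · (log n)^2 ) · exp( - (1/4) · n^(1 - 2 / g(n)^(2/3)) ) ≤ exp( - √n / 4 ). -/
open Filter in
theorem sparse_dominating_set_prob_bound (g : ℕ → ℝ) (hmono : Monotone g)
    (hg : ∀ n : ℕ, 2 ≤ n → 1 < g n ∧ g n < n) (htop : Tendsto g atTop atTop) :
    ∀ᶠ n : ℕ in atTop,
      Real.exp ((n : ℝ) ^ ((1 : ℝ) / 3) * (Real.log n) ^ 2) *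
          Real.exp (-(1 / 4) * (n : ℝ) ^ (1 - 2 / (g n) ^ ((2 : ℝ) / 3))) ≤
        Real.exp (-Real.sqrt n / 4) := by
  -- eventually g n ≥ 15
  have hg15 : ∀ᶠ n : ℕ in atTop, (15 : ℝ) ≤ g n := htop.eventually_ge_atTop 15
  -- eventually (log x)^2 ≤ (1/8) x^(1/3)  (over ℝ, then compose with cast)
  have hlog : ∀ᶠ x : ℝ in atTop, (Real.log x) ^ 2 ≤ (1/8) * x ^ ((1:ℝ)/3) := by
    have h := (isLittleO_log_rpow_rpow_atTop 2 (by norm_num : (0:ℝ) < 1/3)).bound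
      (by norm_num : (0:ℝ) < 1/8)
    filter_upwards [h, eventually_ge_atTop (1:ℝ)] with x hx hx1
    have hlx : 0 ≤ Real.log x := Real.log_nonneg hx1
    have hx0 : (0:ℝ) ≤ x := le_trans zero_le_one hx1
    have := hx
    rw [Real.norm_eq_abs, Real.norm_eq_abs, abs_of_nonneg (Real.rpow_nonneg hlx 2),
      abs_of_nonneg (Real.rpow_nonneg hx0 _)] at this
    calc (Real.log x) ^ 2 = Real.log x ^ (2:ℝ) := by
          rw [← Real.rpow_natCast (Real.log x) 2]; norm_num
      _ ≤ (1/8) * x ^ ((1:ℝ)/3) := this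
  have hlogn : ∀ᶠ n : ℕ in atTop,
      (Real.log n) ^ 2 ≤ (1/8) * (n:ℝ) ^ ((1:ℝ)/3) :=
    tendsto_natCast_atTop_atTop.eventually hlog
  -- eventually √n ≤ (1/2) n^(2/3)
  have hsqrt : ∀ᶠ n : ℕ in atTop, Real.sqrt n ≤ (1/2) * (n:ℝ) ^ ((2:ℝ)/3) := by
    filter_upwards [eventually_ge_atTop 64] with n hn
    have hn1 : (1:ℝ) ≤ (n:ℝ) := Nat.one_le_cast.mpr (by omega)
    have hn0 : (0:ℝ) ≤ (n:ℝ) := by positivity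
    have h64 : (64:ℝ) ≤ (n:ℝ) := by exact_mod_cast hn
    rw [Real.sqrt_eq_rpow]
    have h2 : (2:ℝ) ≤ (n:ℝ) ^ ((1:ℝ)/6) := by
      have : (64:ℝ) ^ ((1:ℝ)/6) ≤ (n:ℝ) ^ ((1:ℝ)/6) :=
        Real.rpow_le_rpow (by norm_num) h64 (by norm_num)
      have h64e : (64:ℝ) ^ ((1:ℝ)/6) = 2 := by
        rw [show (64:ℝ) = 2 ^ (6:ℝ) by norm_num [← Real.rpow_natCast 2 6],
          ← Real.rpow_mul (by norm_num)]
        norm_num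
      linarith [h64e ▸ this]
    have key : (n:ℝ) ^ ((1:ℝ)/2) * 2 ≤ (n:ℝ) ^ ((2:ℝ)/3) := by
      calc (n:ℝ) ^ ((1:ℝ)/2) * 2 ≤ (n:ℝ) ^ ((1:ℝ)/2) * (n:ℝ) ^ ((1:ℝ)/6) := by
            apply mul_le_mul_of_nonneg_left h2 (Real.rpow_nonneg hn0 _)
        _ = (n:ℝ) ^ ((2:ℝ)/3) := by
            rw [← Real.rpow_add (lt_of_lt_of_le zero_lt_one hn1)]; norm_num
    linarith
  filter_upwards [hg15, hlogn, hsqrt, eventually_ge_atTop 1] with n hgn hln hsq hn1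
  have hn1' : (1:ℝ) ≤ (n:ℝ) := by exact_mod_cast hn1
  rw [← Real.exp_add, Real.exp_le_exp]
  -- n^(2/3) ≤ n^(1 - 2/(g n)^(2/3))
  have hgpos : (0:ℝ) < g n := lt_of_lt_of_le (by norm_num) hgn
  have hge : (6:ℝ) ≤ (g n) ^ ((2:ℝ)/3) := by
    have : (15:ℝ) ^ ((2:ℝ)/3) ≤ (g n) ^ ((2:ℝ)/3) :=
      Real.rpow_le_rpow (by norm_num) hgn (by norm_num)
    refine le_trans ?_ this
    have h6 : (6:ℝ) = (216:ℝ) ^ ((1:ℝ)/3) := by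
      rw [show (216:ℝ) = 6 ^ (3:ℝ) by norm_num [← Real.rpow_natCast 6 3],
        ← Real.rpow_mul (by norm_num)]
      norm_num
    rw [h6, show ((2:ℝ)/3) = 2 * ((1:ℝ)/3) by norm_num, Real.rpow_mul (by norm_num : (0:ℝ) ≤ 15)]
    exact Real.rpow_le_rpow (by norm_num) (by norm_num) (by norm_num)
  have hexp : ((2:ℝ)/3) ≤ 1 - 2 / (g n) ^ ((2:ℝ)/3) := by
    have hp : (0:ℝ) < (g n) ^ ((2:ℝ)/3) := lt_of_lt_of_le (by norm_num) hge
    have : 2 / (g n) ^ ((2:ℝ)/3) ≤ 2 / 6 := by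
      apply div_le_div_of_nonneg_left (by norm_num) (by norm_num) hge
    linarith
  have hmonon : (n:ℝ) ^ ((2:ℝ)/3) ≤ (n:ℝ) ^ (1 - 2 / (g n) ^ ((2:ℝ)/3)) :=
    Real.rpow_le_rpow_of_exponent_le hn1' hexp
  have h1 : (n:ℝ) ^ ((1:ℝ)/3) * (Real.log n) ^ 2 ≤ (1/8) * (n:ℝ) ^ ((2:ℝ)/3) := by
    calc (n:ℝ) ^ ((1:ℝ)/3) * (Real.log n) ^ 2
        ≤ (n:ℝ) ^ ((1:ℝ)/3) * ((1/8) * (n:ℝ) ^ ((1:ℝ)/3)) :=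
          mul_le_mul_of_nonneg_left hln (Real.rpow_nonneg (by positivity) _)
      _ = (1/8) * ((n:ℝ) ^ ((1:ℝ)/3) * (n:ℝ) ^ ((1:ℝ)/3)) := by ring
      _ = (1/8) * (n:ℝ) ^ ((2:ℝ)/3) := by
          rw [← Real.rpow_add (lt_of_lt_of_le zero_lt_one hn1')]; norm_num
  nlinarith [hmonon, h1, hsq, Real.rpow_nonneg (show (0:ℝ) ≤ (n:ℝ) by positivity) ((2:ℝ)/3)]
end

section
/- Let G be a finite simple graph on n vertices, let 0 < q < 1 and D > 0, and suppose that every induced subgraph of G on a vertex set W with |W| ≥ D·log n contains a vertex adjacent (within W) to at least (1-q)·|W| other vertices of W. Then G has a dominating set of size at most log n / log(1/q) + D·log n. -/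
theorem greedy_dominating_set {V : Type*} [Fintype V] [DecidableEq V]
    (G : SimpleGraph V) [DecidableRel G.Adj] (n : ℕ) (hcard : Fintype.card V = n)
    (q D : ℝ) (hq0 : 0 < q) (hq1 : q < 1) (hD : 0 < D)
    (hgood : ∀ W : Finset V, D * Real.log n ≤ W.card →
      ∃ v ∈ W, (1 - q) * W.card ≤ ((W.filter fun u => G.Adj v u).card : ℝ)) :
    ∃ S : Finset V, (∀ v ∉ S, ∃ u ∈ S, G.Adj v u) ∧
      (S.card : ℝ) ≤ Real.log n / Real.log (1 / q) + D * Real.log n := by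
  set L := Real.log (1 / q) with hLdef
  have hL : 0 < L := Real.log_pos (by rw [lt_div_iff₀ hq0]; linarith)
  have hlogq : Real.log q = -L := by
    rw [hLdef, Real.log_div one_ne_zero (ne_of_gt hq0), Real.log_one]; ring
  -- From the hypothesis we can derive 1 < D * log n.
  have h1 : 1 < D * Real.log n := by
    by_contra h
    push_neg at h
    rcases le_or_gt (D * Real.log n) 0 with h0 | h0
    · obtain ⟨v, hv, -⟩ := hgood ∅ (by simpa using h0)
      exact absurd hv (by simp)
    · have hlogn : 0 < Real.log n := by
        by_contra hc; push_neg at hc; nlinarith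
      have hn1 : (1 : ℝ) < n := by
        by_contra hc; push_neg at hc
        have := Real.log_nonpos (by positivity) hc
        linarith
    -- V is nonempty
      have hVpos : 0 < Fintype.card V := by
        rw [hcard]; exact_mod_cast (by linarith : (0:ℝ) < n)
      obtain ⟨v⟩ := Fintype.card_pos_iff.mp hVpos
      obtain ⟨v', hv', hdeg⟩ := hgood {v} (by simpa using h)
      have hv'v : v' = v := Finset.mem_singleton.mp hv'
      have : ({v} : Finset V).filter (fun u => G.Adj v' u) = ∅ := by
        subst hv'v
        ext u
        simp only [Finset.mem_filter, Finset.mem_singleton, Finset.notMem_empty, iff_false]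
        rintro ⟨rfl, hadj⟩
        exact G.irrefl hadj
      rw [this] at hdeg
      simp at hdeg
      nlinarith
  -- Main induction
  have key : ∀ m : ℕ, ∀ W : Finset V, W.card ≤ m → ∃ S, S ⊆ W ∧
      (∀ v ∈ W, v ∉ S → ∃ u ∈ S, G.Adj v u) ∧
      (S.card : ℝ) ≤ Real.log W.card / L + D * Real.log n := by
    intro m
    induction m with
    | zero =>
      intro W hW
      have hWe : W = ∅ := Finset.card_eq_zero.mp (Nat.le_zero.mp hW)
      subst hWe
      exact ⟨∅, Finset.Subset.refl _, by simp, by simp; nlinarith⟩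
    | succ m ih =>
      intro W hW
      by_cases hsmall : (W.card : ℝ) < D * Real.log n
      · refine ⟨W, Finset.Subset.refl _, by tauto, ?_⟩
        have hlognonneg : 0 ≤ Real.log W.card := by
          rcases Nat.eq_zero_or_pos W.card with h | h
          · simp [h]
          · exact Real.log_nonneg (by exact_mod_cast h)
        have := div_nonneg hlognonneg hL.le
        linarith
      · push_neg at hsmall
        obtain ⟨v, hvW, hdeg⟩ := hgood W hsmall
        set A := insert v (W.filter fun u => G.Adj v u) with hA
        have hAW : A ⊆ W := Finset.insert_subset hvW (Finset.filter_subset _ _)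
        have hAcard : A.card = (W.filter fun u => G.Adj v u).card + 1 := by
          rw [hA, Finset.card_insert_of_notMem (by simp [G.irrefl])]
        set W' := W \ A with hW'
        have hvW' : v ∉ W' := by simp [hW', hA]
        have hW'cardeq : W'.card = W.card - A.card := Finset.card_sdiff_of_subset hAW
        have hW'lt : W'.card < W.card :=
          Finset.card_lt_card ⟨Finset.sdiff_subset, fun hsub =>
            hvW' (hsub hvW)⟩
        have hW'real : (W'.card : ℝ) ≤ q * W.card - 1 := by
          have hle : A.card ≤ W.card := Finset.card_le_card hAW
          have : (W'.card : ℝ) = (W.card : ℝ) - A.card := by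
            rw [hW'cardeq, Nat.cast_sub hle]
          rw [this, hAcard]
          push_cast
          nlinarith
        obtain ⟨S', hS'sub, hdom', hbound'⟩ := ih W' (by omega)
        have hvS' : v ∉ S' := fun hvs => hvW' (hS'sub hvs)
        refine ⟨insert v S', Finset.insert_subset hvW
          (hS'sub.trans Finset.sdiff_subset), ?_, ?_⟩
        · intro u huW huS
          have hune : u ≠ v := fun h => huS (h ▸ Finset.mem_insert_self _ _)
          have huS' : u ∉ S' := fun h => huS (Finset.mem_insert_of_mem h)
          by_cases huW' : u ∈ W'
          · obtain ⟨w, hwS', hadj⟩ := hdom' u huW' huS'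
            exact ⟨w, Finset.mem_insert_of_mem hwS', hadj⟩
          · have huA : u ∈ A := by
              by_contra huA
              exact huW' (Finset.mem_sdiff.mpr ⟨huW, huA⟩)
            rw [hA, Finset.mem_insert] at huA
            rcases huA with h | h
            · exact absurd h hune
            · exact ⟨v, Finset.mem_insert_self _ _,
                (Finset.mem_filter.mp h).2.symm⟩
        · rw [Finset.card_insert_of_notMem hvS']
          push_cast
          have hWpos : (1 : ℝ) ≤ W.card := by
            exact_mod_cast Finset.card_pos.mpr ⟨v, hvW⟩
          have hlogWnonneg : 0 ≤ Real.log W.card := Real.log_nonneg hWpos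
          rcases Nat.eq_zero_or_pos W'.card with h0 | hpos
          · have : S' = ∅ := Finset.subset_empty.mp
              (Finset.card_eq_zero.mp h0 ▸ hS'sub)
            rw [this]
            simp only [Finset.card_empty, Nat.cast_zero, zero_add]
            have := div_nonneg hlogWnonneg hL.le
            linarith
          · have hW'pos : (0 : ℝ) < W'.card := by exact_mod_cast hpos
            have hlogle : Real.log W'.card ≤ Real.log (q * W.card) :=
              Real.log_le_log hW'pos (by nlinarith)
            have hlogmul : Real.log (q * W.card) = Real.log W.card - L := by
              rw [Real.log_mul (ne_of_gt hq0) (by positivity), hlogq]; ring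
            have hdiv : Real.log W'.card / L ≤ Real.log W.card / L - 1 := by
              have := (div_le_div_iff_of_pos_right hL).mpr hlogle
              rw [hlogmul, sub_div, div_self (ne_of_gt hL)] at this
              linarith
            linarith
  obtain ⟨S, -, hdom, hbound⟩ := key (Fintype.card V) Finset.univ
    (le_of_eq Finset.card_univ)
  refine ⟨S, fun v hv => hdom v (Finset.mem_univ v) hv, ?_⟩
  rwa [Finset.card_univ, hcard] at hbound
end
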